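/- Let ρ_1, ρ_2 ∈ (0,1) with ρ_1 + ρ_2 = 1 and let ψ_3(σ) := σ³ − 1 − 3(σ − 1). Then for all u_1, u_2 ∈ [0,1] with u_1 + u_2 = 1: Σ_{j=1}^2 ψ_3''(u_j/ρ_j) (1/ρ_j) (ρ_j − u_j)² ≥ 2 min{ρ_1, ρ_2} · Σ_{j=1}^2 ψ_3'(u_j/ρ_j) (u_j − ρ_j). That is, the cubic entropy generator ψ_3 satisfies the admissibility condition with constant μ/(2λ) = 2 min{ρ_1, ρ_2}. -/

import Mathlib

/-!
Write `σⱼ = uⱼ / ρⱼ` and `d = u₁ - ρ₁`, so that `u₂ - ρ₂ = -d`. Because both `u` and `ρ` sum to one,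
`σ₁ - σ₂ = d / (ρ₁ ρ₂)`, and the first-derivative side factors as
`3 d (σ₁² - σ₂²) = 3 d² (σ₁ + σ₂) / (ρ₁ ρ₂)`, while the second-derivative side is
`6 d² (σ₁ / ρ₁ + σ₂ / ρ₂) = 6 d² (ρ₂ σ₁ + ρ₁ σ₂) / (ρ₁ ρ₂)`. After cancelling the common factor
`6 d² / (ρ₁ ρ₂)` the claim is `min ρ₁ ρ₂ (σ₁ + σ₂) ≤ ρ₂ σ₁ + ρ₁ σ₂`, which holds termwise.
-/

open Real Set

section TwoState

variable {ρ₁ ρ₂ u₁ u₂ : ℝ}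

lemma div_sub_div_eq_of_add_eq_one (hρ₁ : ρ₁ ≠ 0) (hρ₂ : ρ₂ ≠ 0) (hρ : ρ₁ + ρ₂ = 1)
    (hu : u₁ + u₂ = 1) : u₁ / ρ₁ - u₂ / ρ₂ = (u₁ - ρ₁) / (ρ₁ * ρ₂) := by
  rw [div_sub_div _ _ hρ₁ hρ₂]
  congr 1
  linear_combination u₁ * hρ - ρ₁ * hu

lemma cubic_first_derivative_sum_eq (hρ₁ : ρ₁ ≠ 0) (hρ₂ : ρ₂ ≠ 0) (hρ : ρ₁ + ρ₂ = 1)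
    (hu : u₁ + u₂ = 1) :
    3 * ((u₁ / ρ₁) ^ 2 - 1) * (u₁ - ρ₁) + 3 * ((u₂ / ρ₂) ^ 2 - 1) * (u₂ - ρ₂) =
      3 * (u₁ - ρ₁) ^ 2 / (ρ₁ * ρ₂) * (u₁ / ρ₁ + u₂ / ρ₂) := by
  have hd : u₂ - ρ₂ = -(u₁ - ρ₁) := by linear_combination hu - hρ
  calc 3 * ((u₁ / ρ₁) ^ 2 - 1) * (u₁ - ρ₁) + 3 * ((u₂ / ρ₂) ^ 2 - 1) * (u₂ - ρ₂)
      = 3 * (u₁ - ρ₁) * (u₁ / ρ₁ - u₂ / ρ₂) * (u₁ / ρ₁ + u₂ / ρ₂) := by rw [hd]; ring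
    _ = 3 * (u₁ - ρ₁) ^ 2 / (ρ₁ * ρ₂) * (u₁ / ρ₁ + u₂ / ρ₂) := by
      rw [div_sub_div_eq_of_add_eq_one hρ₁ hρ₂ hρ hu]; ring

lemma cubic_second_derivative_sum_eq (hρ₁ : ρ₁ ≠ 0) (hρ₂ : ρ₂ ≠ 0) (hρ : ρ₁ + ρ₂ = 1)
    (hu : u₁ + u₂ = 1) :
    6 * (u₁ / ρ₁) * (1 / ρ₁) * (ρ₁ - u₁) ^ 2 + 6 * (u₂ / ρ₂) * (1 / ρ₂) * (ρ₂ - u₂) ^ 2 =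
      6 * (u₁ - ρ₁) ^ 2 / (ρ₁ * ρ₂) * (ρ₂ * (u₁ / ρ₁) + ρ₁ * (u₂ / ρ₂)) := by
  have hd : ρ₂ - u₂ = -(ρ₁ - u₁) := by linear_combination hρ - hu
  rw [hd]
  field_simp
  ring

end TwoState

lemma min_mul_add_le {a b x y : ℝ} (hx : 0 ≤ x) (hy : 0 ≤ y) :
    min a b * (x + y) ≤ b * x + a * y := by
  rw [mul_add]
  gcongr
  exacts [min_le_right a b, min_le_left a b]

theorem stmt_8
    (ρ₁ ρ₂ : ℝ) (hρ₁ : ρ₁ ∈ Set.Ioo (0:ℝ) 1) (hρ₂ : ρ₂ ∈ Set.Ioo (0:ℝ) 1)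
    (hρsum : ρ₁ + ρ₂ = 1) :
    ∀ u₁ u₂ : ℝ, u₁ ∈ Set.Icc (0:ℝ) 1 → u₂ ∈ Set.Icc (0:ℝ) 1 → u₁ + u₂ = 1 →
      2 * min ρ₁ ρ₂ *
          ((3 * ((u₁ / ρ₁) ^ 2 - 1)) * (u₁ - ρ₁) + (3 * ((u₂ / ρ₂) ^ 2 - 1)) * (u₂ - ρ₂)) ≤
        (6 * (u₁ / ρ₁)) * (1 / ρ₁) * (ρ₁ - u₁) ^ 2 +
          (6 * (u₂ / ρ₂)) * (1 / ρ₂) * (ρ₂ - u₂) ^ 2 := by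
  intro u₁ u₂ hu₁ hu₂ husum
  have hρ₁₀ : ρ₁ ≠ 0 := hρ₁.1.ne'
  have hρ₂₀ : ρ₂ ≠ 0 := hρ₂.1.ne'
  rw [cubic_first_derivative_sum_eq hρ₁₀ hρ₂₀ hρsum husum,
    cubic_second_derivative_sum_eq hρ₁₀ hρ₂₀ hρsum husum]
  have hσ₁ : 0 ≤ u₁ / ρ₁ := div_nonneg hu₁.1 hρ₁.1.le
  have hσ₂ : 0 ≤ u₂ / ρ₂ := div_nonneg hu₂.1 hρ₂.1.le
  have hc : 0 ≤ 6 * (u₁ - ρ₁) ^ 2 / (ρ₁ * ρ₂) :=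
    div_nonneg (by positivity) (mul_pos hρ₁.1 hρ₂.1).le
  calc 2 * min ρ₁ ρ₂ * (3 * (u₁ - ρ₁) ^ 2 / (ρ₁ * ρ₂) * (u₁ / ρ₁ + u₂ / ρ₂))
      = 6 * (u₁ - ρ₁) ^ 2 / (ρ₁ * ρ₂) * (min ρ₁ ρ₂ * (u₁ / ρ₁ + u₂ / ρ₂)) := by ring
    _ ≤ 6 * (u₁ - ρ₁) ^ 2 / (ρ₁ * ρ₂) * (ρ₂ * (u₁ / ρ₁) + ρ₁ * (u₂ / ρ₂)) :=
      mul_le_mul_of_nonneg_left (min_mul_add_le hσ₁ hσ₂) hc
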